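/- Let C be a nonempty finite set and p_*, p^* nonnegative measures on C with p_*(A) ≤ p^*(A) for all A ⊆ C and 0 < p_*(C) < 1 < p^*(C). Set β = p^*(C) - 1 and define ν(K) = max{p_*(K), p^*(K) - β} for K ⊆ C. Then ν is a convex capacity on C and core(ν) = {p ∈ Δ(C) : p_*(A) ≤ p(A) ≤ p^*(A) for all A ⊆ C}, provided p_* and p^* are additive measures. -/

import Mathlib

open Finset

variable {X : Type*} [Fintype X] [DecidableEq X]

/-- Total mass of `p` on a finite subset `K`. -/
def mass (p : X → ℝ) (K : Finset X) : ℝ := ∑ a ∈ K, p a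

/-- `p` is a probability mass function on `X`. -/
def IsProb (p : X → ℝ) : Prop := (∀ a, 0 ≤ p a) ∧ ∑ a, p a = 1

/-- A capacity on the finite set `X`: normalized and monotone set function. -/
def IsCapacity (ν : Finset X → ℝ) : Prop :=
  ν ∅ = 0 ∧ ν Finset.univ = 1 ∧ ∀ ⦃A B : Finset X⦄, A ⊆ B → ν A ≤ ν B

/-- A convex (supermodular) capacity. -/
def IsConvexCap (ν : Finset X → ℝ) : Prop :=
  IsCapacity ν ∧ ∀ A B : Finset X, ν A + ν B ≤ ν (A ∪ B) + ν (A ∩ B)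

/-- The core of a capacity: all dominating probability measures. -/
def core (ν : Finset X → ℝ) : Set (X → ℝ) :=
  {p | IsProb p ∧ ∀ K : Finset X, ν K ≤ mass p K}

/-!
`ν` is the pointwise maximum of two modular set functions, `p_*` and `p^* - β`. Such a maximum
is supermodular as soon as the mixed inequality `p_*(A) + p^*(B) ≤ p^*(A ∪ B) + p_*(A ∩ B)`
holds, and this is just `p_*(A \ B) ≤ p^*(A \ B)`. For a probability `p`, since
`p^*(K) - β = 1 - p^*(Kᶜ)`, the bound `p^*(K) - β ≤ p(K)` is the upper bound
`p(Kᶜ) ≤ p^*(Kᶜ)` on the complement, so the core condition splits into the lower and the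
upper bounds.
-/

omit [Fintype X] [DecidableEq X] in
lemma mass_empty (p : X → ℝ) : mass p ∅ = 0 :=
  Finset.sum_empty

omit [Fintype X] [DecidableEq X] in
lemma mass_mono {p : X → ℝ} (hp : ∀ a, 0 ≤ p a) {A B : Finset X} (h : A ⊆ B) :
    mass p A ≤ mass p B :=
  Finset.sum_le_sum_of_subset_of_nonneg h fun a _ _ => hp a

omit [Fintype X] in
lemma mass_union_add_mass_inter (p : X → ℝ) (A B : Finset X) :
    mass p (A ∪ B) + mass p (A ∩ B) = mass p A + mass p B :=
  Finset.sum_union_inter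

omit [Fintype X] in
lemma mass_inter_add_mass_sdiff (p : X → ℝ) (A B : Finset X) :
    mass p (A ∩ B) + mass p (A \ B) = mass p A :=
  Finset.sum_inter_add_sum_sdiff A B p

lemma mass_add_mass_compl (p : X → ℝ) (A : Finset X) :
    mass p A + mass p Aᶜ = mass p univ :=
  Finset.sum_add_sum_compl A p

omit [Fintype X] in
lemma mass_add_mass_le_of_mass_sdiff_le {p q : X → ℝ} {S T : Finset X}
    (h : mass p (S \ T) ≤ mass q (S \ T)) :
    mass p S + mass q T ≤ mass q (S ∪ T) + mass p (S ∩ T) := by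
  linarith [mass_inter_add_mass_sdiff p S T, mass_inter_add_mass_sdiff q S T,
    mass_union_add_mass_inter q S T]

theorem supermodular_max {α : Type*} [Lattice α] {f g : α → ℝ}
    (hf : ∀ A B, f A + f B ≤ f (A ⊔ B) + f (A ⊓ B))
    (hg : ∀ A B, g A + g B ≤ g (A ⊔ B) + g (A ⊓ B))
    (hfg : ∀ A B, f A + g B ≤ g (A ⊔ B) + f (A ⊓ B)) (A B : α) :
    max (f A) (g A) + max (f B) (g B) ≤
      max (f (A ⊔ B)) (g (A ⊔ B)) + max (f (A ⊓ B)) (g (A ⊓ B)) := by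
  have hf_le := le_max_left (f (A ⊔ B)) (g (A ⊔ B))
  have hg_le := le_max_right (f (A ⊔ B)) (g (A ⊔ B))
  have hf_le' := le_max_left (f (A ⊓ B)) (g (A ⊓ B))
  have hg_le' := le_max_right (f (A ⊓ B)) (g (A ⊓ B))
  rcases max_cases (f A) (g A) with ⟨hA, -⟩ | ⟨hA, -⟩ <;>
    rcases max_cases (f B) (g B) with ⟨hB, -⟩ | ⟨hB, -⟩ <;> rw [hA, hB]
  · linarith [hf A B]
  · linarith [hfg A B]
  · have hBA := hfg B A
    rw [sup_comm, inf_comm] at hBA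
    linarith
  · linarith [hg A B]

def intervalCapacity (pst pstar : X → ℝ) (K : Finset X) : ℝ :=
  max (mass pst K) (mass pstar K - (mass pstar univ - 1))

theorem intervalCapacity_supermodular {pst pstar : X → ℝ}
    (hle : ∀ A : Finset X, mass pst A ≤ mass pstar A) (A B : Finset X) :
    intervalCapacity pst pstar A + intervalCapacity pst pstar B ≤
      intervalCapacity pst pstar (A ∪ B) + intervalCapacity pst pstar (A ∩ B) := by
  refine supermodular_max (f := mass pst) (g := fun K => mass pstar K - (mass pstar univ - 1))
    (fun A B => ?_) (fun A B => ?_) (fun A B => ?_) A B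
  all_goals rw [Finset.sup_eq_union, Finset.inf_eq_inter]
  · exact (mass_union_add_mass_inter pst A B).ge
  · linarith [mass_union_add_mass_inter pstar A B]
  · linarith [mass_add_mass_le_of_mass_sdiff_le (hle (A \ B))]

omit [DecidableEq X] in
theorem intervalCapacity_isCapacity {pst pstar : X → ℝ}
    (hst : ∀ a, 0 ≤ pst a) (hstar : ∀ a, 0 ≤ pstar a)
    (h1 : mass pst univ ≤ 1) (h2 : 1 ≤ mass pstar univ) :
    IsCapacity (intervalCapacity pst pstar) := by
  refine ⟨?_, ?_, fun A B hAB => ?_⟩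
  · simp only [intervalCapacity, mass_empty]
    exact max_eq_left (by linarith)
  · rw [intervalCapacity, max_eq_right] <;> linarith
  · exact max_le_max (mass_mono hst hAB) (by linarith [mass_mono hstar hAB])

theorem intervalCapacity_isConvexCap {pst pstar : X → ℝ}
    (hst : ∀ a, 0 ≤ pst a) (hstar : ∀ a, 0 ≤ pstar a)
    (hle : ∀ A : Finset X, mass pst A ≤ mass pstar A)
    (h1 : mass pst univ ≤ 1) (h2 : 1 ≤ mass pstar univ) :
    IsConvexCap (intervalCapacity pst pstar) :=
  ⟨intervalCapacity_isCapacity hst hstar h1 h2, intervalCapacity_supermodular hle⟩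

lemma sub_le_mass_iff_mass_compl_le {p q : X → ℝ} (hp : ∑ a, p a = 1) (K : Finset X) :
    mass q K - (mass q univ - 1) ≤ mass p K ↔ mass p Kᶜ ≤ mass q Kᶜ := by
  have hp_univ : mass p univ = 1 := hp
  constructor <;> intro h <;>
    linarith [mass_add_mass_compl p K, mass_add_mass_compl q K]

theorem core_intervalCapacity (pst pstar : X → ℝ) :
    core (intervalCapacity pst pstar) = {p | IsProb p ∧
      ∀ A : Finset X, mass pst A ≤ mass p A ∧ mass p A ≤ mass pstar A} := by
  ext p
  refine and_congr_right fun hp => ?_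
  simp only [intervalCapacity, max_le_iff, forall_and,
    sub_le_mass_iff_mass_compl_le hp.2]
  exact and_congr_right'
    (compl_surjective.forall (p := fun K : Finset X => mass p K ≤ mass pstar K)).symm

theorem stmt8_general (pst pstar : X → ℝ)
    (hst : ∀ a, 0 ≤ pst a) (hstar : ∀ a, 0 ≤ pstar a)
    (hle : ∀ A : Finset X, mass pst A ≤ mass pstar A)
    (h1 : mass pst Finset.univ < 1)
    (h2 : 1 < mass pstar Finset.univ) (ν : Finset X → ℝ)
    (hν : ∀ K : Finset X,
      ν K = max (mass pst K) (mass pstar K - (mass pstar Finset.univ - 1))) :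
    IsConvexCap ν ∧
      core ν = {p | IsProb p ∧
        ∀ A : Finset X, mass pst A ≤ mass p A ∧ mass p A ≤ mass pstar A} := by
  obtain rfl : ν = intervalCapacity pst pstar := funext hν
  exact ⟨intervalCapacity_isConvexCap hst hstar hle h1.le h2.le,
    core_intervalCapacity pst pstar⟩

/-- Interval beliefs: the capacity max{p₋(K), p⁺(K) − β} is convex with core equal
to the set of probabilities lying between the two measures. Here the ambient
finite set is the type X (playing the role of C). -/
theorem stmt8 [Nonempty X] (pst pstar : X → ℝ)
    (hst : ∀ a, 0 ≤ pst a) (hstar : ∀ a, 0 ≤ pstar a)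
    (hle : ∀ A : Finset X, mass pst A ≤ mass pstar A)
    (h0 : 0 < mass pst Finset.univ) (h1 : mass pst Finset.univ < 1)
    (h2 : 1 < mass pstar Finset.univ) (ν : Finset X → ℝ)
    (hν : ∀ K : Finset X,
      ν K = max (mass pst K) (mass pstar K - (mass pstar Finset.univ - 1))) :
    IsConvexCap ν ∧
      core ν = {p | IsProb p ∧
        ∀ A : Finset X, mass pst A ≤ mass p A ∧ mass p A ≤ mass pstar A} :=
  stmt8_general pst pstar hst hstar hle h1 h2 ν hν
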